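/- arXiv:2007.10482 — 2 statements merged into one kernel-verified Lean document; each statement's English description precedes it below -/
import Mathlib

section
/- If 0 < m ≤ f(τ)/g(τ) for all τ ∈ (1,x) and p ≥ 1, then (H^{α,β}_{1,x}[g^p](x))^{1/p} ≤ (1/(m+1)) · (H^{α,β}_{1,x}[(f+g)^p](x))^{1/p}, for positive functions f, g with finite integrals, α > 0, β ∈ (0,1], x > 1. -/
/-!
Since `f ≥ m g` on `(1, x)`, pointwise `g ≤ (f + g) / (m + 1)`, so
`g ^ p ≤ (f + g) ^ p / (m + 1) ^ p`. The kernel of `H` is nonnegative, so this survives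
integration, and taking `p`-th roots gives the claim.
-/

open MeasureTheory Real

/-- Kernel of the generalized proportional Hadamard fractional integral. -/
noncomputable def Hker (α β x : ℝ) (z : ℝ → ℝ) (t : ℝ) : ℝ :=
  Real.exp ((β - 1) / β * (Real.log x - Real.log t)) *
    (Real.log x - Real.log t) ^ (α - 1) * z t / t

/-- The one-sided generalized proportional Hadamard fractional integral
`H^{α,β}_{1,x}[z](x)`. -/
noncomputable def H (α β x : ℝ) (z : ℝ → ℝ) : ℝ :=
  (1 / (β ^ α * Real.Gamma α)) * ∫ t in Set.Ioo 1 x, Hker α β x z t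

lemma le_one_div_add_one_mul_add_of_le_div {m a b : ℝ} (hb : 0 < b) (hm : 0 < m + 1)
    (h : m ≤ a / b) : b ≤ 1 / (m + 1) * (a + b) := by
  rw [le_div_iff₀ hb] at h
  rw [one_div_mul_eq_div, le_div_iff₀ hm]
  linarith

lemma Real.rpow_one_div_le_mul_rpow_one_div {a b c p : ℝ} (ha : 0 ≤ a) (hb : 0 ≤ b)
    (hc : 0 ≤ c) (hp : 0 < p) (h : a ≤ c ^ p * b) : a ^ (1 / p) ≤ c * b ^ (1 / p) :=
  calc a ^ (1 / p) ≤ (c ^ p * b) ^ (1 / p) := rpow_le_rpow ha h (by positivity)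
    _ = c * b ^ (1 / p) := by
      rw [mul_rpow (by positivity) hb, ← rpow_mul hc, mul_one_div_cancel hp.ne', rpow_one]

section Hadamard

variable {α β x : ℝ} {z w : ℝ → ℝ}

lemma Hker_const_mul (c : ℝ) (z : ℝ → ℝ) (t : ℝ) :
    Hker α β x (fun s => c * z s) t = c * Hker α β x z t := by
  unfold Hker
  ring

lemma H_const_mul (c : ℝ) (z : ℝ → ℝ) : H α β x (fun s => c * z s) = c * H α β x z := by
  simp only [H, Hker_const_mul, integral_const_mul]
  ring

lemma Hker_nonneg {t : ℝ} (ht : t ∈ Set.Ioo 1 x) (hz : 0 ≤ z t) : 0 ≤ Hker α β x z t := by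
  have hlog : 0 < log x - log t := sub_pos.2 (log_lt_log (by linarith [ht.1]) ht.2)
  have ht0 : 0 < t := by linarith [ht.1]
  unfold Hker
  positivity

lemma Hker_mono {t : ℝ} (ht : t ∈ Set.Ioo 1 x) (hzw : z t ≤ w t) :
    Hker α β x z t ≤ Hker α β x w t := by
  have hlog : 0 < log x - log t := sub_pos.2 (log_lt_log (by linarith [ht.1]) ht.2)
  have ht0 : 0 < t := by linarith [ht.1]
  unfold Hker
  gcongr

lemma H_nonneg (hα : 0 < α) (hβ : 0 < β) (hz : ∀ t ∈ Set.Ioo 1 x, 0 ≤ z t) :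
    0 ≤ H α β x z := by
  unfold H
  exact mul_nonneg (by positivity)
    (setIntegral_nonneg measurableSet_Ioo fun t ht => Hker_nonneg ht (hz t ht))

lemma H_mono (hα : 0 < α) (hβ : 0 < β) (hz : ∀ t ∈ Set.Ioo 1 x, 0 ≤ z t)
    (hzw : ∀ t ∈ Set.Ioo 1 x, z t ≤ w t) (hw : IntegrableOn (Hker α β x w) (Set.Ioo 1 x)) :
    H α β x z ≤ H α β x w := by
  unfold H
  refine mul_le_mul_of_nonneg_left ?_ (by positivity)
  exact setIntegral_mono_of_nonneg (fun t ht => Hker_nonneg ht (hz t ht))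
    (fun t ht => Hker_mono ht (hzw t ht)) hw

lemma H_le_mul_H {c : ℝ} (hα : 0 < α) (hβ : 0 < β) (hz : ∀ t ∈ Set.Ioo 1 x, 0 ≤ z t)
    (hzw : ∀ t ∈ Set.Ioo 1 x, z t ≤ c * w t) (hw : IntegrableOn (Hker α β x w) (Set.Ioo 1 x)) :
    H α β x z ≤ c * H α β x w := by
  rw [← H_const_mul]
  refine H_mono hα hβ hz hzw ?_
  rw [show Hker α β x (fun s => c * w s) = fun t => c * Hker α β x w t from
    funext (Hker_const_mul c w)]
  exact hw.const_mul c

end Hadamard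

theorem stmt_6_general (p α β m x : ℝ) (f g : ℝ → ℝ) (hp : 1 ≤ p) (hα : 0 < α)
    (hβ : β ∈ Set.Ioc (0:ℝ) 1)
    (hg : ∀ t ∈ Set.Ici (1:ℝ), 0 < g t)
    (hfgint : IntegrableOn (Hker α β x (fun t => (f t + g t) ^ p)) (Set.Ioo 1 x))
    (hm : 0 < m) (hbound : ∀ t ∈ Set.Ioo (1:ℝ) x, m ≤ f t / g t) :
    (H α β x fun t => g t ^ p) ^ (1 / p) ≤
      1 / (m + 1) * (H α β x fun t => (f t + g t) ^ p) ^ (1 / p) := by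
  have hp0 : 0 < p := by linarith
  have hc : 0 < 1 / (m + 1) := by positivity
  have hg' : ∀ t ∈ Set.Ioo 1 x, 0 < g t := fun t ht => hg t ht.1.le
  have hg_le : ∀ t ∈ Set.Ioo 1 x, g t ≤ 1 / (m + 1) * (f t + g t) := fun t ht =>
    le_one_div_add_one_mul_add_of_le_div (hg' t ht) (by linarith) (hbound t ht)
  have hfg_pos : ∀ t ∈ Set.Ioo 1 x, 0 < f t + g t := fun t ht =>
    pos_of_mul_pos_right ((hg' t ht).trans_le (hg_le t ht)) hc.le
  have hpow_le : ∀ t ∈ Set.Ioo 1 x, g t ^ p ≤ (1 / (m + 1)) ^ p * (f t + g t) ^ p :=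
    fun t ht => by
      rw [← mul_rpow hc.le (hfg_pos t ht).le]
      exact rpow_le_rpow (hg' t ht).le (hg_le t ht) hp0.le
  exact rpow_one_div_le_mul_rpow_one_div
    (H_nonneg hα hβ.1 fun t ht => rpow_nonneg (hg' t ht).le p)
    (H_nonneg hα hβ.1 fun t ht => rpow_nonneg (hfg_pos t ht).le p) hc.le hp0
    (H_le_mul_H hα hβ.1 (fun t ht => rpow_nonneg (hg' t ht).le p) hpow_le hfgint)

theorem stmt_6 (p α β m x : ℝ) (f g : ℝ → ℝ) (hp : 1 ≤ p) (hα : 0 < α)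
    (hβ : β ∈ Set.Ioc (0:ℝ) 1) (hx : 1 < x)
    (hf : ∀ t ∈ Set.Ici (1:ℝ), 0 < f t) (hg : ∀ t ∈ Set.Ici (1:ℝ), 0 < g t)
    (hgint : IntegrableOn (Hker α β x (fun t => g t ^ p)) (Set.Ioo 1 x))
    (hfgint : IntegrableOn (Hker α β x (fun t => (f t + g t) ^ p)) (Set.Ioo 1 x))
    (hm : 0 < m) (hbound : ∀ t ∈ Set.Ioo (1:ℝ) x, m ≤ f t / g t) :
    (H α β x fun t => g t ^ p) ^ (1 / p) ≤
      1 / (m + 1) * (H α β x fun t => (f t + g t) ^ p) ^ (1 / p) :=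
  stmt_6_general p α β m x f g hp hα hβ hg hfgint hm hbound
end

section
/- Let f, h be positive continuous functions on [1,∞) with f ≤ h, f/h decreasing and f increasing on [1,∞). Then for p ≥ 1, α, φ > 0, β, φ' ∈ (0,1], x > 1: H^{α,β}_{1,x}[f](x)·H^{φ,φ'}_{1,x}[h^p](x) + H^{φ,φ'}_{1,x}[f](x)·H^{α,β}_{1,x}[h^p](x) ≥ H^{α,β}_{1,x}[h](x)·H^{φ,φ'}_{1,x}[f^p](x) + H^{φ,φ'}_{1,x}[h](x)·H^{α,β}_{1,x}[f^p](x). -/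
open MeasureTheory Real

/-!
With `K`, `L` the (positive) kernels of `H^{α,β}` and `H^{φ,φ'}`, both sides are the same positive
multiple of double integrals of `K(t) L(s)` against `h(t) f(s)^p + f(t)^p h(s)` and
`f(t) h(s)^p + h(t)^p f(s)`, so it suffices to compare these integrands. For `t ≤ s` put
`a = f t`, `b = f s`, `A = h t`, `B = h s`; then `a ≤ b ≤ B`, `a ≤ A`, `b A ≤ a B`, and with
`q = p - 1`
`a B^p + b A^p - A b^p - B a^p = a B (B^q - a^q) + b A (A^q - b^q) ≥ b A (B^q + A^q - a^q - b^q) ≥ 0`.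
-/

lemma rpow_add_mul_rpow_le {p a b A B : ℝ} (hp : 1 ≤ p) (ha : 0 ≤ a) (hab : a ≤ b)
    (haA : a ≤ A) (hbB : b ≤ B) (hcross : b * A ≤ a * B) :
    A * b ^ p + B * a ^ p ≤ a * B ^ p + b * A ^ p := by
  have hb : 0 ≤ b := ha.trans hab
  have hA : 0 ≤ A := ha.trans haA
  have hB : 0 ≤ B := hb.trans hbB
  have hq : 0 ≤ p - 1 := by linarith
  have hsplit : ∀ y : ℝ, 0 ≤ y → y ^ p = y * y ^ (p - 1) := fun y hy => by
    rw [← Real.rpow_one_add' hy (by linarith), add_sub_cancel]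
  have hqaB : a ^ (p - 1) ≤ B ^ (p - 1) := rpow_le_rpow ha (hab.trans hbB) hq
  have hqaA : a ^ (p - 1) ≤ A ^ (p - 1) := rpow_le_rpow ha haA hq
  have hqbB : b ^ (p - 1) ≤ B ^ (p - 1) := rpow_le_rpow hb hbB hq
  have h₁ : b * A * (B ^ (p - 1) - a ^ (p - 1)) ≤ a * B * (B ^ (p - 1) - a ^ (p - 1)) :=
    mul_le_mul_of_nonneg_right hcross (by linarith)
  have h₂ : 0 ≤ b * A * (B ^ (p - 1) + A ^ (p - 1) - a ^ (p - 1) - b ^ (p - 1)) :=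
    mul_nonneg (mul_nonneg hb hA) (by linarith)
  rw [hsplit a ha, hsplit b hb, hsplit A hA, hsplit B hB]
  linarith

lemma mul_rpow_add_rpow_mul_le_of_antitoneOn_div {ι : Type*} [LinearOrder ι] {s : Set ι}
    {f h : ι → ℝ} {p : ℝ} (hp : 1 ≤ p) (hf : ∀ t ∈ s, 0 ≤ f t) (hh : ∀ t ∈ s, 0 < h t)
    (hle : ∀ t ∈ s, f t ≤ h t) (hdec : AntitoneOn (fun t => f t / h t) s)
    (hinc : MonotoneOn f s) {t u : ι} (ht : t ∈ s) (hu : u ∈ s) :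
    h t * f u ^ p + f t ^ p * h u ≤ f t * h u ^ p + h t ^ p * f u := by
  wlog htu : t ≤ u generalizing t u
  · linarith [this hu ht (le_of_not_ge htu)]
  have hcross : f u * h t ≤ f t * h u :=
    (div_le_div_iff₀ (hh u hu) (hh t ht)).1 (hdec ht hu htu)
  linarith [rpow_add_mul_rpow_le hp (hf t ht) (hinc ht hu htu) (hle t ht) (hle u hu) hcross]

lemma Hker_eq_mul (α β x : ℝ) (z : ℝ → ℝ) (t : ℝ) : Hker α β x z t = Hker α β x 1 t * z t := by
  simp only [Hker, Pi.one_apply]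
  ring

lemma Hker_one_pos (α β : ℝ) {x t : ℝ} (ht : t ∈ Set.Ioo 0 x) : 0 < Hker α β x 1 t := by
  have hlog : 0 < Real.log x - Real.log t := sub_pos.2 (Real.log_lt_log ht.1 ht.2)
  have ht0 := ht.1
  simp only [Hker, Pi.one_apply]
  positivity

lemma Hker_mul_Hker_add_le {α β φ φ' x t u : ℝ} {A B C D : ℝ → ℝ} (ht : t ∈ Set.Ioo 0 x)
    (hu : u ∈ Set.Ioo 0 x) (hABCD : A t * B u + B t * A u ≤ C t * D u + D t * C u) :
    Hker α β x A t * Hker φ φ' x B u + Hker α β x B t * Hker φ φ' x A u ≤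
      Hker α β x C t * Hker φ φ' x D u + Hker α β x D t * Hker φ φ' x C u := by
  rw [Hker_eq_mul α β x A, Hker_eq_mul α β x B, Hker_eq_mul α β x C, Hker_eq_mul α β x D,
    Hker_eq_mul φ φ' x A, Hker_eq_mul φ φ' x B, Hker_eq_mul φ φ' x C, Hker_eq_mul φ φ' x D]
  have hK := mul_pos (Hker_one_pos α β ht) (Hker_one_pos φ φ' hu)
  linarith [mul_le_mul_of_nonneg_left hABCD hK.le]

lemma integral_mul_integral_add_le {X Y : Type*} [MeasurableSpace X] [MeasurableSpace Y]
    {μ : Measure X} {ν : Measure Y} [SFinite μ] [SFinite ν]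
    {a b c d : X → ℝ} {a' b' c' d' : Y → ℝ}
    (ha : Integrable a μ) (hb : Integrable b μ) (hc : Integrable c μ) (hd : Integrable d μ)
    (ha' : Integrable a' ν) (hb' : Integrable b' ν) (hc' : Integrable c' ν)
    (hd' : Integrable d' ν)
    (hle : ∀ᵐ z ∂μ.prod ν, a z.1 * b' z.2 + b z.1 * a' z.2 ≤ c z.1 * d' z.2 + d z.1 * c' z.2) :
    (∫ t, a t ∂μ) * (∫ u, b' u ∂ν) + (∫ t, b t ∂μ) * (∫ u, a' u ∂ν) ≤
      (∫ t, c t ∂μ) * (∫ u, d' u ∂ν) + (∫ t, d t ∂μ) * (∫ u, c' u ∂ν) := by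
  have hmono : ∫ z, (a z.1 * b' z.2 + b z.1 * a' z.2) ∂μ.prod ν ≤
      ∫ z, (c z.1 * d' z.2 + d z.1 * c' z.2) ∂μ.prod ν :=
    integral_mono_ae ((ha.mul_prod hb').add (hb.mul_prod ha'))
      ((hc.mul_prod hd').add (hd.mul_prod hc')) hle
  rwa [integral_add (ha.mul_prod hb') (hb.mul_prod ha'),
    integral_add (hc.mul_prod hd') (hd.mul_prod hc'), integral_prod_mul, integral_prod_mul,
    integral_prod_mul, integral_prod_mul] at hmono

theorem stmt_18_general (p α β φ φ' x : ℝ) (f h : ℝ → ℝ) (hp : 1 ≤ p) (hα : 0 < α)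
    (hφ : 0 < φ) (hβ : β ∈ Set.Ioc (0:ℝ) 1) (hφ' : φ' ∈ Set.Ioc (0:ℝ) 1)
    (hf : ∀ t ∈ Set.Ici (1:ℝ), 0 < f t) (hh : ∀ t ∈ Set.Ici (1:ℝ), 0 < h t)
    (hle : ∀ t ∈ Set.Ici (1:ℝ), f t ≤ h t)
    (hdec : AntitoneOn (fun t => f t / h t) (Set.Ici 1))
    (hinc : MonotoneOn f (Set.Ici 1))
    (hfint : IntegrableOn (Hker α β x f) (Set.Ioo 1 x))
    (hhint : IntegrableOn (Hker α β x h) (Set.Ioo 1 x))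
    (hfpint : IntegrableOn (Hker α β x (fun t => f t ^ p)) (Set.Ioo 1 x))
    (hhpint : IntegrableOn (Hker α β x (fun t => h t ^ p)) (Set.Ioo 1 x))
    (hfint' : IntegrableOn (Hker φ φ' x f) (Set.Ioo 1 x))
    (hhint' : IntegrableOn (Hker φ φ' x h) (Set.Ioo 1 x))
    (hfpint' : IntegrableOn (Hker φ φ' x (fun t => f t ^ p)) (Set.Ioo 1 x))
    (hhpint' : IntegrableOn (Hker φ φ' x (fun t => h t ^ p)) (Set.Ioo 1 x)) :
    H α β x h * H φ φ' x (fun t => f t ^ p) +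
        H φ φ' x h * H α β x (fun t => f t ^ p) ≤
      H α β x f * H φ φ' x (fun t => h t ^ p) +
        H φ φ' x f * H α β x (fun t => h t ^ p) := by
  have hIoo : Set.Ioo 1 x ⊆ Set.Ioo 0 x := Set.Ioo_subset_Ioo_left zero_le_one
  have hpt : ∀ z ∈ Set.Ioo 1 x ×ˢ Set.Ioo 1 x,
      Hker α β x h z.1 * Hker φ φ' x (fun t => f t ^ p) z.2 +
          Hker α β x (fun t => f t ^ p) z.1 * Hker φ φ' x h z.2 ≤
        Hker α β x f z.1 * Hker φ φ' x (fun t => h t ^ p) z.2 +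
          Hker α β x (fun t => h t ^ p) z.1 * Hker φ φ' x f z.2 := fun z ⟨ht, hu⟩ =>
    Hker_mul_Hker_add_le (hIoo ht) (hIoo hu) <|
      mul_rpow_add_rpow_mul_le_of_antitoneOn_div hp (fun t ht => (hf t ht).le) hh hle hdec hinc
        (le_of_lt ht.1) (le_of_lt hu.1)
  have hint := integral_mul_integral_add_le hhint hfpint hfint hhpint hhint' hfpint' hfint'
    hhpint' (by
      rw [Measure.prod_restrict]
      exact (ae_restrict_mem (measurableSet_Ioo.prod measurableSet_Ioo)).mono hpt)
  have hconst : 0 ≤ 1 / (β ^ α * Gamma α) * (1 / (φ' ^ φ * Gamma φ)) := by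
    have := rpow_pos_of_pos hβ.1 α
    have := rpow_pos_of_pos hφ'.1 φ
    have := Gamma_pos_of_pos hα
    have := Gamma_pos_of_pos hφ
    positivity
  simp only [H]
  linarith [mul_le_mul_of_nonneg_left hint hconst]

theorem stmt_18 (p α β φ φ' x : ℝ) (f h : ℝ → ℝ) (hp : 1 ≤ p) (hα : 0 < α)
    (hφ : 0 < φ) (hβ : β ∈ Set.Ioc (0:ℝ) 1) (hφ' : φ' ∈ Set.Ioc (0:ℝ) 1) (hx : 1 < x)
    (hf : ∀ t ∈ Set.Ici (1:ℝ), 0 < f t) (hh : ∀ t ∈ Set.Ici (1:ℝ), 0 < h t)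
    (hfc : ContinuousOn f (Set.Ici 1)) (hhc : ContinuousOn h (Set.Ici 1))
    (hle : ∀ t ∈ Set.Ici (1:ℝ), f t ≤ h t)
    (hdec : AntitoneOn (fun t => f t / h t) (Set.Ici 1))
    (hinc : MonotoneOn f (Set.Ici 1))
    (hfint : IntegrableOn (Hker α β x f) (Set.Ioo 1 x))
    (hhint : IntegrableOn (Hker α β x h) (Set.Ioo 1 x))
    (hfpint : IntegrableOn (Hker α β x (fun t => f t ^ p)) (Set.Ioo 1 x))
    (hhpint : IntegrableOn (Hker α β x (fun t => h t ^ p)) (Set.Ioo 1 x))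
    (hfint' : IntegrableOn (Hker φ φ' x f) (Set.Ioo 1 x))
    (hhint' : IntegrableOn (Hker φ φ' x h) (Set.Ioo 1 x))
    (hfpint' : IntegrableOn (Hker φ φ' x (fun t => f t ^ p)) (Set.Ioo 1 x))
    (hhpint' : IntegrableOn (Hker φ φ' x (fun t => h t ^ p)) (Set.Ioo 1 x)) :
    H α β x h * H φ φ' x (fun t => f t ^ p) +
        H φ φ' x h * H α β x (fun t => f t ^ p) ≤
      H α β x f * H φ φ' x (fun t => h t ^ p) +
        H φ φ' x f * H α β x (fun t => h t ^ p) :=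
  stmt_18_general p α β φ φ' x f h hp hα hφ hβ hφ' hf hh hle hdec hinc hfint hhint hfpint hhpint
    hfint' hhint' hfpint' hhpint'
end
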